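/- arXiv:2311.01592 — 8 statements merged into one kernel-verified Lean document; each statement's English description precedes it below -/
import Mathlib

section
/- Let α ∈ (0,1), Λ₁ > 1, A > 0, c > 0 and z₁(t; l̄) = (1+(Λ₁-1)t)^{1-α}·A·l̄^α. Then z₁'(1) ≥ c if and only if l̄ ≥ Λ₁·[c/(A(1-α)(Λ₁-1))]^{1/α}. Consequently the full-enclosure density threshold equals Λ₁ times the no-enclosure threshold. -/
open Real Set

theorem stmt4 (α Λ A c lb : ℝ) (hα : α ∈ Ioo (0:ℝ) 1) (hΛ : 1 < Λ)
    (hA : 0 < A) (hc : 0 < c) (hl : 0 < lb) :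
    (deriv (fun t : ℝ => (1 + (Λ - 1) * t) ^ (1-α) * A * lb ^ α) 1 ≥ c ↔
      lb ≥ Λ * (c / (A * (1-α) * (Λ - 1))) ^ ((1:ℝ)/α)) ∧
    Λ * (c / (A * (1-α) * (Λ - 1))) ^ ((1:ℝ)/α)
      = Λ * ((c / (A * (1-α) * (Λ - 1))) ^ ((1:ℝ)/α)) := by
  obtain ⟨hα0, hα1⟩ := hα
  have hΛ0 : (0:ℝ) < Λ := by linarith
  have hK : 0 < A * (1-α) * (Λ - 1) := by
    have : 0 < 1 - α := by linarith
    have : 0 < Λ - 1 := by linarith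
    positivity
  refine ⟨?_, rfl⟩
  -- derivative computation
  have hg : HasDerivAt (fun t : ℝ => 1 + (Λ - 1) * t) (Λ - 1) 1 := by
    simpa using ((hasDerivAt_id (1:ℝ)).const_mul (Λ - 1)).const_add 1
  have hne : (1 + (Λ - 1) * 1 : ℝ) ≠ 0 := by nlinarith
  have hD : HasDerivAt (fun t : ℝ => (1 + (Λ - 1) * t) ^ (1-α) * A * lb ^ α)
      (((1-α) * (1 + (Λ - 1) * 1) ^ (1-α-1) * (Λ - 1)) * A * lb ^ α) 1 := by
    have := ((hg.rpow_const (p := 1-α) (Or.inl hne)).mul_const A).mul_const (lb ^ α)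
    refine this.congr_deriv ?_
    ring
  rw [hD.deriv]
  have hΛ1 : (1 + (Λ - 1) * 1 : ℝ) = Λ := by ring
  rw [hΛ1]
  set K := A * (1-α) * (Λ - 1) with hKdef
  set R := Λ * (c / K) ^ ((1:ℝ)/α) with hRdef
  have hR0 : 0 < R := by
    have : 0 < (c / K) ^ ((1:ℝ)/α) := rpow_pos_of_pos (div_pos hc hK) _
    positivity
  have key : (1-α) * Λ ^ (1-α-1) * (Λ - 1) * A * lb ^ α ≥ c ↔ lb ^ α ≥ R ^ α := by
    have hRα : R ^ α = Λ ^ α * (c / K) := by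
      rw [hRdef, mul_rpow hΛ0.le (rpow_pos_of_pos (div_pos hc hK) _).le,
        ← rpow_mul (div_pos hc hK).le, one_div, inv_mul_cancel₀ hα0.ne', rpow_one]
    rw [hRα]
    have hΛα : (0:ℝ) < Λ ^ α := rpow_pos_of_pos hΛ0 _
    have hΛeq : Λ ^ (1-α-1) = (Λ ^ α)⁻¹ := by
      rw [show (1-α-1) = -α by ring, rpow_neg hΛ0.le]
    rw [hΛeq, ge_iff_le, ge_iff_le]
    have heq : (1-α) * (Λ ^ α)⁻¹ * (Λ - 1) * A * lb ^ α = K * lb ^ α / Λ ^ α := by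
      rw [hKdef, div_eq_mul_inv]; ring
    rw [heq, le_div_iff₀ hΛα, mul_div_assoc', div_le_iff₀ hK]
    constructor <;> intro h <;> nlinarith
  rw [key, ge_iff_le, ge_iff_le, rpow_le_rpow_iff hR0.le hl.le hα0]
end

section
/- Define r(t) = θ(1-α)·A·l̄^α·(Λ₀/(1+(Λ₀-1)t))^α on [0,1], where Λ₀ = (αθ)^{1/(1-α)}. Then r is strictly decreasing in t if θ > 1/α and strictly increasing in t if θ < 1/α (and constant if θ = 1/α). -/
/-!
Writing `Λ₀ = (αθ)^{1/(1-α)}`, the map `t ↦ Λ₀ / (1 + (Λ₀ - 1) t)` is a positive Möbius map on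
`[0, 1]`, decreasing when `Λ₀ > 1` and increasing when `Λ₀ < 1`, and `r` is a positive multiple of
its `α`-th power. Since `1 / (1 - α) > 0`, the sign of `Λ₀ - 1` is the sign of `αθ - 1`.
-/

open Real Set

lemma one_add_sub_one_mul_pos {Λ t : ℝ} (hΛ : 0 < Λ) (ht : t ∈ Icc (0:ℝ) 1) :
    0 < 1 + (Λ - 1) * t := by
  obtain ⟨ht0, ht1⟩ := ht
  rcases le_or_gt 1 Λ with h | h <;> nlinarith

lemma strictAntiOn_div_one_add_sub_one_mul {Λ : ℝ} (hΛ : 1 < Λ) :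
    StrictAntiOn (fun t => Λ / (1 + (Λ - 1) * t)) (Icc 0 1) := fun t ht _ hs hts =>
  div_lt_div_of_pos_left (by linarith) (one_add_sub_one_mul_pos (by linarith) ht) (by nlinarith)

lemma strictMonoOn_div_one_add_sub_one_mul {Λ : ℝ} (hΛ0 : 0 < Λ) (hΛ1 : Λ < 1) :
    StrictMonoOn (fun t => Λ / (1 + (Λ - 1) * t)) (Icc 0 1) := fun _ _ s hs hts =>
  div_lt_div_of_pos_left hΛ0 (one_add_sub_one_mul_pos hΛ0 hs) (by nlinarith)

section ConstMulRpow

variable {f : ℝ → ℝ} {s : Set ℝ} {c p : ℝ}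

lemma StrictMonoOn.const_mul_rpow (hf : StrictMonoOn f s) (hf0 : ∀ t ∈ s, 0 ≤ f t)
    (hc : 0 < c) (hp : 0 < p) : StrictMonoOn (fun t => c * f t ^ p) s :=
  fun _ ht _ hu htu => mul_lt_mul_of_pos_left (rpow_lt_rpow (hf0 _ ht) (hf ht hu htu) hp) hc

lemma StrictAntiOn.const_mul_rpow (hf : StrictAntiOn f s) (hf0 : ∀ t ∈ s, 0 ≤ f t)
    (hc : 0 < c) (hp : 0 < p) : StrictAntiOn (fun t => c * f t ^ p) s :=
  fun _ ht _ hu htu => mul_lt_mul_of_pos_left (rpow_lt_rpow (hf0 _ hu) (hf ht hu htu) hp) hc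

end ConstMulRpow

theorem stmt7 (α θ A lb : ℝ) (hα : α ∈ Ioo (0:ℝ) 1) (hθ : 0 < θ)
    (hA : 0 < A) (hl : 0 < lb)
    (Λ : ℝ) (hΛ : Λ = (α * θ) ^ ((1:ℝ)/(1-α))) :
    (1/α < θ →
      StrictAntiOn (fun t : ℝ => θ * (1-α) * A * lb ^ α * (Λ / (1 + (Λ - 1) * t)) ^ α)
        (Icc 0 1)) ∧
    (θ < 1/α →
      StrictMonoOn (fun t : ℝ => θ * (1-α) * A * lb ^ α * (Λ / (1 + (Λ - 1) * t)) ^ α)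
        (Icc 0 1)) ∧
    (θ = 1/α →
      ∀ t ∈ Icc (0:ℝ) 1, ∀ s ∈ Icc (0:ℝ) 1,
        θ * (1-α) * A * lb ^ α * (Λ / (1 + (Λ - 1) * t)) ^ α =
        θ * (1-α) * A * lb ^ α * (Λ / (1 + (Λ - 1) * s)) ^ α) := by
  obtain ⟨hα0, hα1⟩ := hα
  have h1α : 0 < 1 - α := sub_pos.2 hα1
  have hexp : 0 < 1 / (1 - α) := by positivity
  have hΛ0 : 0 < Λ := hΛ ▸ rpow_pos_of_pos (by positivity) _
  have hc : 0 < θ * (1 - α) * A * lb ^ α := by positivity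
  have hg0 : ∀ t ∈ Icc (0:ℝ) 1, 0 ≤ Λ / (1 + (Λ - 1) * t) := fun t ht =>
    (div_pos hΛ0 (one_add_sub_one_mul_pos hΛ0 ht)).le
  refine ⟨fun hθα => ?_, fun hθα => ?_, fun hθα => ?_⟩
  · have hΛ1 : 1 < Λ := hΛ ▸ one_lt_rpow ((div_lt_iff₀' hα0).1 hθα) hexp
    exact (strictAntiOn_div_one_add_sub_one_mul hΛ1).const_mul_rpow hg0 hc hα0
  · have hΛ1 : Λ < 1 := hΛ ▸ rpow_lt_one (by positivity) ((lt_div_iff₀' hα0).1 hθα) hexp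
    exact (strictMonoOn_div_one_add_sub_one_mul hΛ0 hΛ1).const_mul_rpow hg0 hc hα0
  · have hΛ1 : Λ = 1 := by rw [hΛ, hθα, mul_one_div_cancel hα0.ne', one_rpow]
    intro t _ s _
    simp [hΛ1]
end

section
/- If Λ₀ < 1 (low-TFP case, θ < 1/α), then the threshold (1/Λ₀)·[c/(θA(1-α))]^{1/α} is strictly greater than [c/(θA(1-α))]^{1/α}; hence there is a nonempty open interval of population densities l̄ for which r(1) > c > r(0), where r(t) = θ(1-α)A l̄^α (Λ₀/(1+(Λ₀-1)t))^α. On this interval both no enclosure and full enclosure are Nash equilibria of the aggregative enclosure game. -/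
/-! With `K = θA(1-α)` and `B = (c/K)^(1/α)`, the map `y ↦ K y^α` is increasing, so `r(1) = K lb^α > c`
iff `lb > B`, and `r(0) = K (lb Λ₀)^α < c` iff `lb < B/Λ₀`. Since `αθ < 1`, also `Λ₀ < 1`, so the
interval `(B, B/Λ₀)` is nonempty. -/

open Real Set

section RpowThreshold

variable {K c α y : ℝ}

theorem div_rpow_one_div_lt_iff (hK : 0 < K) (hc : 0 ≤ c) (hα : 0 < α) (hy : 0 ≤ y) :
    (c / K) ^ (1 / α) < y ↔ c < K * y ^ α := by
  rw [one_div, rpow_inv_lt_iff_of_pos (by positivity) hy hα, div_lt_iff₀' hK]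

theorem lt_div_rpow_one_div_iff (hK : 0 < K) (hc : 0 ≤ c) (hα : 0 < α) (hy : 0 ≤ y) :
    y < (c / K) ^ (1 / α) ↔ K * y ^ α < c := by
  rw [one_div, lt_rpow_inv_iff_of_pos hy (by positivity) hα, lt_div_iff₀' hK]

end RpowThreshold

theorem rpow_mem_Ioo_zero_one {x z : ℝ} (hx : x ∈ Ioo 0 1) (hz : 0 < z) : x ^ z ∈ Ioo 0 1 :=
  ⟨rpow_pos_of_pos hx.1 z, rpow_lt_one hx.1.le hx.2 hz⟩

theorem stmt9 (α θ A c : ℝ) (hα : α ∈ Ioo (0:ℝ) 1) (hθ : 0 < θ) (hθα : θ < 1/α)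
    (hA : 0 < A) (hc : 0 < c)
    (Λ : ℝ) (hΛ : Λ = (α * θ) ^ ((1:ℝ)/(1-α))) :
    (c / (θ * A * (1-α))) ^ ((1:ℝ)/α) <
      (1/Λ) * (c / (θ * A * (1-α))) ^ ((1:ℝ)/α) ∧
    ∀ lb ∈ Ioo ((c / (θ * A * (1-α))) ^ ((1:ℝ)/α))
        ((1/Λ) * (c / (θ * A * (1-α))) ^ ((1:ℝ)/α)),
      θ * (1-α) * A * lb ^ α * (Λ / (1 + (Λ - 1) * 1)) ^ α > c ∧
      c > θ * (1-α) * A * lb ^ α * (Λ / (1 + (Λ - 1) * 0)) ^ α := by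
  obtain ⟨hα0, hα1⟩ := hα
  have hK : 0 < θ * A * (1 - α) := mul_pos (mul_pos hθ hA) (sub_pos.2 hα1)
  set B := (c / (θ * A * (1 - α))) ^ ((1:ℝ) / α)
  have hB : 0 < B := by positivity
  have hαθ : α * θ ∈ Ioo 0 1 := ⟨by positivity, by rwa [lt_div_iff₀' hα0] at hθα⟩
  obtain ⟨hΛ0, hΛ1⟩ : Λ ∈ Ioo 0 1 := hΛ ▸ rpow_mem_Ioo_zero_one hαθ (one_div_pos.2 (sub_pos.2 hα1))
  refine ⟨lt_mul_of_one_lt_left hB (one_lt_one_div hΛ0 hΛ1), ?_⟩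
  rintro lb ⟨hlo, hhi⟩
  have hlb : 0 < lb := hB.trans hlo
  constructor
  · have hfull := (div_rpow_one_div_lt_iff hK hc.le hα0 hlb.le).1 hlo
    rw [mul_one, add_sub_cancel, div_self hΛ0.ne', one_rpow]
    linear_combination hfull
  · have hlbΛ : lb * Λ < B := (lt_div_iff₀ hΛ0).1 (by rwa [one_div_mul_eq_div] at hhi)
    have hnone := (lt_div_rpow_one_div_iff hK hc.le hα0 (by positivity)).1 hlbΛ
    rw [mul_rpow hlb.le hΛ0.le] at hnone
    rw [mul_zero, add_zero, div_one]
    linear_combination hnone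
end

section
/- Define z₀(t) = (θΛ₀^α t + (1-t))/(1+(Λ₀-1)t)^α and z₁(t) = (1+(Λ₁-1)t)^{1-α}, where Λ₀ = (αθ)^{1/(1-α)}, Λ₁ = θ^{1/(1-α)}, α ∈ (0,1), θ > 0. Then z₀(0) = z₁(0) = 1, z₀(1) = θΛ₀^α/Λ₀^α = θ and z₁(1) = Λ₁^{1-α} = θ, and z₀(t) ≤ z₁(t) for all t ∈ [0,1], with strict inequality on (0,1) whenever Λ₀ ≠ Λ₁, i.e. for all θ > 0 and α ∈ (0,1). -/
open Real Set

-- strict weighted AM-GM for two positive reals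
lemma amgm2_strict {w₁ w₂ p q : ℝ} (hw₁ : 0 < w₁) (hw₂ : 0 < w₂) (hw : w₁ + w₂ = 1)
    (hp : 0 < p) (hq : 0 < q) (hpq : p ≠ q) : p ^ w₁ * q ^ w₂ < w₁ * p + w₂ * q := by
  have h := strictConcaveOn_log_Ioi.2 (mem_Ioi.2 hp) (mem_Ioi.2 hq) hpq hw₁ hw₂ hw
  simp only [smul_eq_mul] at h
  have hpos : 0 < w₁ * p + w₂ * q := by
    have := mul_pos hw₁ hp; have := mul_pos hw₂ hq; linarith
  have h2 : exp (w₁ * log p + w₂ * log q) < exp (log (w₁ * p + w₂ * q)) := exp_lt_exp.2 h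
  rwa [exp_log hpos, exp_add, mul_comm w₁ (log p), mul_comm w₂ (log q),
    exp_mul, exp_mul, exp_log hp, exp_log hq] at h2

lemma holder2_strict {α a b c d : ℝ} (hα : 0 < α) (hα1 : α < 1)
    (ha : 0 < a) (hb : 0 < b) (hc : 0 < c) (hd : 0 < d)
    (hne : a * (b + d) ≠ b * (a + c)) :
    a ^ (1 - α) * b ^ α + c ^ (1 - α) * d ^ α < (a + c) ^ (1 - α) * (b + d) ^ α := by
  have hS : 0 < a + c := by linarith
  have hT : 0 < b + d := by linarith
  have h1 : (a / (a + c)) ^ (1 - α) * (b / (b + d)) ^ α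
      < (1 - α) * (a / (a + c)) + α * (b / (b + d)) := by
    apply amgm2_strict (by linarith) hα (by ring) (by positivity) (by positivity)
    intro h
    exact hne (by linarith [(div_eq_div_iff hS.ne' hT.ne').1 h])
  have h2 : (c / (a + c)) ^ (1 - α) * (d / (b + d)) ^ α
      ≤ (1 - α) * (c / (a + c)) + α * (d / (b + d)) :=
    Real.geom_mean_le_arith_mean2_weighted (by linarith) hα.le (by positivity) (by positivity)
      (by ring)
  have hsum : (a / (a + c)) ^ (1 - α) * (b / (b + d)) ^ α
      + (c / (a + c)) ^ (1 - α) * (d / (b + d)) ^ α < 1 := by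
    have : (1 - α) * (a / (a + c)) + α * (b / (b + d))
        + ((1 - α) * (c / (a + c)) + α * (d / (b + d))) = 1 := by
      field_simp; ring
    linarith
  have hS' : (a + c) ^ (1 - α) ≠ 0 := by positivity
  have hT' : (b + d) ^ α ≠ 0 := by positivity
  have key : a ^ (1 - α) * b ^ α + c ^ (1 - α) * d ^ α
      = ((a / (a + c)) ^ (1 - α) * (b / (b + d)) ^ α
        + (c / (a + c)) ^ (1 - α) * (d / (b + d)) ^ α) * ((a + c) ^ (1 - α) * (b + d) ^ α) := by
    rw [Real.div_rpow ha.le hS.le, Real.div_rpow hb.le hT.le,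
      Real.div_rpow hc.le hS.le, Real.div_rpow hd.le hT.le]
    field_simp
  have hR : 0 < (a + c) ^ (1 - α) * (b + d) ^ α := by positivity
  calc a ^ (1 - α) * b ^ α + c ^ (1 - α) * d ^ α
      = _ := key
    _ < 1 * ((a + c) ^ (1 - α) * (b + d) ^ α) := mul_lt_mul_of_pos_right hsum hR
    _ = (a + c) ^ (1 - α) * (b + d) ^ α := one_mul _

theorem stmt11 (α θ : ℝ) (hα : α ∈ Ioo (0:ℝ) 1) (hθ : 0 < θ)
    (Λ₀ Λ₁ : ℝ) (hΛ₀ : Λ₀ = (α * θ) ^ ((1:ℝ)/(1-α))) (hΛ₁ : Λ₁ = θ ^ ((1:ℝ)/(1-α))) :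
    (θ * Λ₀ ^ α * 0 + (1 - 0)) / (1 + (Λ₀ - 1) * 0) ^ α = 1 ∧
    (1 + (Λ₁ - 1) * 0) ^ (1-α) = 1 ∧
    (θ * Λ₀ ^ α * 1 + (1 - 1)) / (1 + (Λ₀ - 1) * 1) ^ α = θ ∧
    (1 + (Λ₁ - 1) * 1) ^ (1-α) = θ ∧
    (∀ t ∈ Icc (0:ℝ) 1,
      (θ * Λ₀ ^ α * t + (1 - t)) / (1 + (Λ₀ - 1) * t) ^ α ≤ (1 + (Λ₁ - 1) * t) ^ (1-α)) ∧
    (∀ t ∈ Ioo (0:ℝ) 1,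
      (θ * Λ₀ ^ α * t + (1 - t)) / (1 + (Λ₀ - 1) * t) ^ α < (1 + (Λ₁ - 1) * t) ^ (1-α)) := by
  obtain ⟨hα0, hα1⟩ := hα
  have h1α : 0 < 1 - α := by linarith
  have hΛ₀pos : 0 < Λ₀ := hΛ₀ ▸ Real.rpow_pos_of_pos (mul_pos hα0 hθ) _
  have hΛ₁pos : 0 < Λ₁ := hΛ₁ ▸ Real.rpow_pos_of_pos hθ _
  have hθeq : Λ₁ ^ (1 - α) = θ := by
    rw [hΛ₁, ← Real.rpow_mul hθ.le, one_div, inv_mul_cancel₀ h1α.ne', Real.rpow_one]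
  have hΛlt : Λ₀ < Λ₁ := by
    have hαθ : α * θ < θ := by nlinarith [mul_pos hθ h1α]
    rw [hΛ₀, hΛ₁]
    exact Real.rpow_lt_rpow (mul_pos hα0 hθ).le hαθ (by positivity)
  have h20 : (θ * Λ₀ ^ α * 0 + (1 - 0)) / (1 + (Λ₀ - 1) * 0) ^ α = 1 := by
    norm_num
  have h10 : (1 + (Λ₁ - 1) * 0) ^ (1-α) = 1 := by
    norm_num
  have h21 : (θ * Λ₀ ^ α * 1 + (1 - 1)) / (1 + (Λ₀ - 1) * 1) ^ α = θ := by
    have hh : (1:ℝ) + (Λ₀ - 1) * 1 = Λ₀ := by ring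
    rw [hh, mul_one, sub_self, add_zero, mul_div_assoc,
      div_self (ne_of_gt (Real.rpow_pos_of_pos hΛ₀pos α)), mul_one]
  have h11 : (1 + (Λ₁ - 1) * 1) ^ (1-α) = θ := by
    have hh : (1:ℝ) + (Λ₁ - 1) * 1 = Λ₁ := by ring
    rw [hh, hθeq]
  have hstrict : ∀ t ∈ Ioo (0:ℝ) 1,
      (θ * Λ₀ ^ α * t + (1 - t)) / (1 + (Λ₀ - 1) * t) ^ α < (1 + (Λ₁ - 1) * t) ^ (1-α) := by
    intro t ht
    obtain ⟨ht0, ht1'⟩ := ht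
    have h1t : 0 < 1 - t := by linarith
    set D := 1 + (Λ₀ - 1) * t with hDdef
    have hD : 0 < D := by rw [hDdef]; nlinarith [mul_pos ht0 hΛ₀pos]
    have hDα : 0 < D ^ α := Real.rpow_pos_of_pos hD α
    have e4 : t * Λ₀ / D + (1 - t) / D = 1 := by
      rw [← add_div, div_eq_one_iff_eq hD.ne']; rw [hDdef]; ring
    have ha : 0 < t * Λ₁ := mul_pos ht0 hΛ₁pos
    have hb : 0 < t * Λ₀ / D := div_pos (mul_pos ht0 hΛ₀pos) hD
    have hd : 0 < (1 - t) / D := div_pos h1t hD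
    have hne : t * Λ₁ * (t * Λ₀ / D + (1 - t) / D) ≠ t * Λ₀ / D * (t * Λ₁ + (1 - t)) := by
      rw [e4, mul_one]
      intro h
      rw [div_mul_eq_mul_div, eq_comm, div_eq_iff hD.ne', hDdef] at h
      nlinarith [mul_pos (mul_pos ht0 h1t) (sub_pos.2 hΛlt)]
    have hm := holder2_strict hα0 hα1 ha hb h1t hd hne
    have ht1 : t ^ (1 - α) * t ^ α = t := by
      rw [← Real.rpow_add ht0]; norm_num
    have ht2 : (1 - t) ^ (1 - α) * (1 - t) ^ α = 1 - t := by
      rw [← Real.rpow_add h1t]; norm_num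
    have e1 : (t * Λ₁) ^ (1 - α) * (t * Λ₀ / D) ^ α = θ * Λ₀ ^ α * t / D ^ α := by
      rw [Real.mul_rpow ht0.le hΛ₁pos.le, hθeq,
        Real.div_rpow (mul_nonneg ht0.le hΛ₀pos.le) hD.le,
        Real.mul_rpow ht0.le hΛ₀pos.le]
      field_simp
      linear_combination ht1
    have e2 : (1 - t) ^ (1 - α) * ((1 - t) / D) ^ α = (1 - t) / D ^ α := by
      rw [Real.div_rpow h1t.le hD.le]
      field_simp
      linear_combination ht2
    have e3 : t * Λ₁ + (1 - t) = 1 + (Λ₁ - 1) * t := by ring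
    rw [e1, e2, e4, e3, Real.one_rpow, mul_one] at hm
    rw [add_div]
    exact hm
  refine ⟨h20, h10, h21, h11, ?_, hstrict⟩
  intro t ht
  rcases eq_or_lt_of_le ht.1 with h0 | h0
  · subst h0
    rw [h20, h10]
  · rcases eq_or_lt_of_le ht.2 with h1 | h1
    · subst h1
      rw [h21, h11]
    · exact (hstrict t ⟨h0, h1⟩).le
end

section
/- Let α ∈ (0,1), Λ₀ > 1, and z₀(t; l̄) = (θΛ₀^α t + 1-t)/(1+(Λ₀-1)t)^α · A l̄^α with Λ₀ = (αθ)^{1/(1-α)}. Then z₀'(1) ≥ c if and only if l̄ ≥ [c/(θA(1-α))]^{1/α}; that is, the constrained planner's full-enclosure threshold coincides exactly with the decentralized full-enclosure threshold r(1) ≥ c. -/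
open Real Set

theorem stmt14 (α θ A c lb : ℝ) (hα : α ∈ Ioo (0:ℝ) 1) (hθ : 0 < θ)
    (hA : 0 < A) (hc : 0 < c) (hl : 0 < lb)
    (Λ : ℝ) (hΛ : Λ = (α * θ) ^ ((1:ℝ)/(1-α))) (hΛgt : 1 < Λ) :
    deriv (fun t : ℝ => (θ * Λ ^ α * t + 1 - t) / (1 + (Λ - 1) * t) ^ α * (A * lb ^ α)) 1
      = θ * (1-α) * A * lb ^ α ∧
    (deriv (fun t : ℝ => (θ * Λ ^ α * t + 1 - t) / (1 + (Λ - 1) * t) ^ α * (A * lb ^ α)) 1 ≥ c ↔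
      lb ≥ (c / (θ * A * (1-α))) ^ ((1:ℝ)/α)) := by
  obtain ⟨hα0, hα1⟩ := hα
  have hΛ0 : 0 < Λ := by linarith
  have hαθ : 0 < α * θ := mul_pos hα0 hθ
  have h1α : (0:ℝ) < 1 - α := by linarith
  -- key identity: Λ ^ (1-α) = α*θ
  have hkey : Λ ^ (1-α) = α * θ := by
    rw [hΛ, ← Real.rpow_mul hαθ.le, one_div, inv_mul_cancel₀ h1α.ne', Real.rpow_one]
  have hqα : Λ ^ (α - 1) = 1 / (α * θ) := by
    have h : Λ ^ (α - 1) = (Λ ^ (1-α))⁻¹ := by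
      rw [← Real.rpow_neg hΛ0.le]; ring_nf
    rw [h, hkey, one_div]
  have hpα : Λ ^ α = Λ / (α * θ) := by
    have : Λ ^ α = Λ ^ (α - 1) * Λ ^ (1:ℝ) := by
      rw [← Real.rpow_add hΛ0]; ring_nf
    rw [this, hqα, Real.rpow_one]; ring
  -- derivative computation
  have hu : HasDerivAt (fun t : ℝ => 1 + (Λ - 1) * t) (Λ - 1) 1 := by
    simpa using ((hasDerivAt_id (1:ℝ)).const_mul (Λ - 1)).const_add 1
  have hune : (1 + (Λ - 1) * 1 : ℝ) ≠ 0 := by norm_num; linarith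
  have hh : HasDerivAt (fun t : ℝ => (1 + (Λ - 1) * t) ^ α)
      ((Λ - 1) * α * (1 + (Λ - 1) * 1) ^ (α - 1)) 1 :=
    hu.rpow_const (Or.inl hune)
  have hg : HasDerivAt (fun t : ℝ => θ * Λ ^ α * t + 1 - t) (θ * Λ ^ α - 1) 1 := by
    have := ((hasDerivAt_id (1:ℝ)).const_mul (θ * Λ ^ α)).add_const 1
    have h2 := this.sub (hasDerivAt_id' (1:ℝ)); rw [mul_one] at h2; exact h2
  have hhne : ((1 + (Λ - 1) * 1 : ℝ)) ^ α ≠ 0 := by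
    have : (1 + (Λ - 1) * 1 : ℝ) = Λ := by ring
    rw [this]
    exact (Real.rpow_pos_of_pos hΛ0 α).ne'
  have hdiv := (hg.div hh hhne).mul_const (A * lb ^ α)
  have hΛ1 : (1 + (Λ - 1) * 1 : ℝ) = Λ := by ring
  have hD : deriv (fun t : ℝ => (θ * Λ ^ α * t + 1 - t) / (1 + (Λ - 1) * t) ^ α * (A * lb ^ α)) 1
      = θ * (1-α) * A * lb ^ α := by
    rw [show deriv (fun t : ℝ => (θ * Λ ^ α * t + 1 - t) / (1 + (Λ - 1) * t) ^ α * (A * lb ^ α)) 1 = _ from hdiv.deriv, hΛ1, hpα, hqα]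
    field_simp
    ring
  refine ⟨hD, ?_⟩
  rw [hD]
  have hco : 0 < θ * A * (1 - α) := by positivity
  have hx : (0:ℝ) ≤ c / (θ * A * (1-α)) := by positivity
  constructor
  · intro h
    rw [ge_iff_le, one_div, Real.rpow_inv_le_iff_of_pos hx hl.le hα0]
    rw [div_le_iff₀ hco]
    calc c ≤ θ * (1-α) * A * lb ^ α := h
    _ = lb ^ α * (θ * A * (1 - α)) := by ring
  · intro h
    rw [ge_iff_le, one_div, Real.rpow_inv_le_iff_of_pos hx hl.le hα0, div_le_iff₀ hco] at h
    calc (c:ℝ) ≤ lb ^ α * (θ * A * (1 - α)) := h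
    _ = θ * (1-α) * A * lb ^ α := by ring
end

section
/- For Λ₀ < 1, the monopolist's profit π(t) = r(t)·t - c·t with r(t) = θ(1-α)A l̄^α (Λ₀/(1+(Λ₀-1)t))^α is strictly convex on [0,1]; hence its maximum over [0,1] is attained at t = 0 or t = 1, and t = 1 is optimal (with π(1) > 0 = π(0)) if and only if l̄ > [c/(θA(1-α))]^{1/α}. -/
open Real Set

theorem stmt16 (α θ A c lb : ℝ) (hα : α ∈ Ioo (0:ℝ) 1) (hθ : 0 < θ) (hθα : θ < 1/α)
    (hA : 0 < A) (hc : 0 < c) (hl : 0 < lb)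
    (Λ : ℝ) (hΛ : Λ = (α * θ) ^ ((1:ℝ)/(1-α))) :
    let profit : ℝ → ℝ :=
      fun t => θ * (1-α) * A * lb ^ α * (Λ / (1 + (Λ - 1) * t)) ^ α * t - c * t
    StrictConvexOn ℝ (Icc (0:ℝ) 1) profit ∧
    (∀ t ∈ Icc (0:ℝ) 1, profit t ≤ max (profit 0) (profit 1)) ∧
    profit 0 = 0 ∧
    (profit 1 > 0 ↔ lb > (c / (θ * A * (1-α))) ^ ((1:ℝ)/α)) := by
  obtain ⟨hα0, hα1⟩ := hα
  intro profit
  have hαθ0 : 0 < α * θ := mul_pos hα0 hθ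
  have hαθ1 : α * θ < 1 := by
    have := mul_lt_mul_of_pos_left hθα hα0
    rwa [mul_one_div, div_self hα0.ne'] at this
  have hΛ0 : 0 < Λ := by rw [hΛ]; exact Real.rpow_pos_of_pos hαθ0 _
  have hΛ1 : Λ < 1 := by
    rw [hΛ]
    have h1α : (0:ℝ) < 1 - α := by linarith
    exact Real.rpow_lt_one hαθ0.le hαθ1 (by positivity)
  set m : ℝ := Λ - 1 with hm
  have hmneg : m < 0 := by simp [hm]; linarith
  set K : ℝ := θ * (1-α) * A * lb ^ α with hK
  have hK0 : 0 < K := by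
    have : (0:ℝ) < lb ^ α := Real.rpow_pos_of_pos hl α
    have h1α : (0:ℝ) < 1 - α := by linarith
    positivity
  set KΛ : ℝ := K * Λ ^ α with hKΛ
  have hKΛ0 : 0 < KΛ := mul_pos hK0 (Real.rpow_pos_of_pos hΛ0 α)
  set u : ℝ → ℝ := fun t => 1 + m * t with hu
  set S : Set ℝ := {t | 0 < u t} with hS
  have hSopen : IsOpen S := isOpen_lt continuous_const (by continuity)
  have hsub : Icc (0:ℝ) 1 ⊆ S := by
    intro t ht
    simp only [hS, hu, Set.mem_setOf_eq]
    nlinarith [ht.1, ht.2]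
  -- profit agrees with F on S
  set F : ℝ → ℝ := fun t => KΛ * (t * u t ^ (-α)) - c * t with hF
  have heq : ∀ t ∈ S, profit t = F t := by
    intro t ht
    have hut : 0 < u t := ht
    simp only [hF, profit, hKΛ, hK]
    rw [Real.div_rpow hΛ0.le hut.le, Real.rpow_neg hut.le]
    field_simp
    try ring
  set F1 : ℝ → ℝ := fun t => KΛ * (u t ^ (-α) - α * m * t * u t ^ (-α - 1)) - c with hF1
  have hud : ∀ t : ℝ, HasDerivAt u m t := by
    intro t
    have h := ((hasDerivAt_id t).const_mul m).const_add 1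
    rw [mul_one] at h
    exact h
  have hder1 : ∀ x ∈ S, HasDerivAt profit (F1 x) x := by
    intro x hx
    have hux : 0 < u x := hx
    have hw : HasDerivAt (fun t => u t ^ (-α)) (m * (-α) * u x ^ (-α - 1)) x :=
      (hud x).rpow_const (Or.inl hux.ne')
    have h1 : HasDerivAt (fun t => t * u t ^ (-α))
        (1 * u x ^ (-α) + x * (m * (-α) * u x ^ (-α - 1))) x :=
      (hasDerivAt_id x).mul hw
    have h2 : HasDerivAt F (F1 x) x := by
      have := (h1.const_mul KΛ).sub ((hasDerivAt_id x).const_mul c)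
      refine this.congr_deriv ?_
      simp only [hF1]
      ring
    exact h2.congr_of_eventuallyEq
      (Filter.eventuallyEq_of_mem (hSopen.mem_nhds hx) heq)
  set F2 : ℝ → ℝ := fun t =>
    KΛ * (-2 * α * m * u t ^ (-α - 1) + α * (α + 1) * m ^ 2 * t * u t ^ (-α - 2)) with hF2
  have hder2 : ∀ x ∈ S, HasDerivAt F1 (F2 x) x := by
    intro x hx
    have hux : 0 < u x := hx
    have hw : HasDerivAt (fun t => u t ^ (-α)) (m * (-α) * u x ^ (-α - 1)) x :=
      (hud x).rpow_const (Or.inl hux.ne')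
    have hw2 : HasDerivAt (fun t => u t ^ (-α - 1)) (m * (-α - 1) * u x ^ (-α - 1 - 1)) x :=
      (hud x).rpow_const (Or.inl hux.ne')
    have h1 : HasDerivAt (fun t => α * m * t * u t ^ (-α - 1))
        ((α * m) * u x ^ (-α - 1) + (α * m * x) * (m * (-α - 1) * u x ^ (-α - 1 - 1))) x := by
      have := (((hasDerivAt_id x).const_mul (α * m)).mul hw2)
      refine this.congr_deriv ?_
      simp only [id]
      ring
    have := ((hw.sub h1).const_mul KΛ).sub_const c
    have h2 : HasDerivAt (fun t => KΛ * (u t ^ (-α) - α * m * t * u t ^ (-α - 1)) - c) (F2 x) x := by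
      refine this.congr_deriv ?_
      simp only [hF2]
      have : (-α - 1 - 1 : ℝ) = -α - 2 := by ring
      rw [this]
      ring
    exact h2
  have hderiv1 : ∀ x ∈ S, deriv profit x = F1 x := fun x hx => (hder1 x hx).deriv
  -- strict convexity
  have hconv : StrictConvexOn ℝ (Icc (0:ℝ) 1) profit := by
    apply strictConvexOn_of_deriv2_pos (convex_Icc 0 1)
    · intro x hx
      exact (hder1 x (hsub hx)).differentiableAt.continuousAt.continuousWithinAt
    · intro x hx
      rw [interior_Icc] at hx
      have hxS : x ∈ S := hsub (Ioo_subset_Icc_self hx)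
      have hux : 0 < u x := hxS
      have e1 : deriv^[2] profit x = deriv (deriv profit) x := by
        simp [Function.iterate_succ, Function.comp]
      rw [e1]
      have e2 : deriv (deriv profit) x = deriv F1 x :=
        Filter.EventuallyEq.deriv_eq
          (Filter.eventuallyEq_of_mem (hSopen.mem_nhds hxS) hderiv1)
      rw [e2, (hder2 x hxS).deriv]
      simp only [hF2]
      have p1 : (0:ℝ) < u x ^ (-α - 1) := Real.rpow_pos_of_pos hux _
      have p2 : (0:ℝ) < u x ^ (-α - 2) := Real.rpow_pos_of_pos hux _
      have hx0 : 0 < x := hx.1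
      have t1 : (0:ℝ) < -2 * α * m * u x ^ (-α - 1) := by
        have : (0:ℝ) < -2 * α * m := by nlinarith
        exact mul_pos this p1
      have t2 : (0:ℝ) < α * (α + 1) * m ^ 2 * x * u x ^ (-α - 2) := by
        have hm2 : (0:ℝ) < m ^ 2 := by nlinarith
        exact mul_pos (mul_pos (mul_pos (mul_pos hα0 (by linarith)) hm2) hx0) p2
      exact mul_pos hKΛ0 (by linarith)
  refine ⟨hconv, ?_, ?_, ?_⟩
  · intro t ht
    have : t ∈ segment ℝ (0:ℝ) 1 := by rwa [segment_eq_Icc (by norm_num : (0:ℝ) ≤ 1)]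
    exact hconv.convexOn.le_on_segment (left_mem_Icc.mpr (by norm_num))
      (right_mem_Icc.mpr (by norm_num)) this
  · simp [profit]
  · have hp1 : profit 1 = θ * (1 - α) * A * lb ^ α - c := by
      show θ * (1-α) * A * lb ^ α * (Λ / (1 + (Λ - 1) * 1)) ^ α * 1 - c * 1 = _
      rw [show (1:ℝ) + (Λ - 1) * 1 = Λ by ring, div_self hΛ0.ne', Real.one_rpow]
      ring
    rw [hp1]
    have hD : (0:ℝ) < θ * A * (1 - α) := by
      have : (0:ℝ) < 1 - α := by linarith
      positivity
    rw [gt_iff_lt, sub_pos, gt_iff_lt, one_div,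
      Real.rpow_inv_lt_iff_of_pos (by positivity) hl.le hα0]
    rw [div_lt_iff₀ hD]
    constructor
    · intro h; nlinarith [Real.rpow_pos_of_pos hl α]
    · intro h; nlinarith [Real.rpow_pos_of_pos hl α]
end

section
/- With compensation rate τ ∈ [0,1] and regulation μ ∈ [0,1], the net private return to enclosure at aggregate rate t equals (1-α)A l̄^α·(θΛ_μ^α - τ)/(1+(Λ_μ-1)t)^α - c, and this expression is positive at t = 0 if and only if l̄ > [c/((1-α)A(θΛ_μ^α - τ))]^{1/α} (assuming θΛ_μ^α > τ). In the special case μ = 1 and τ = 1 with θ > 1, this no-enclosure threshold coincides with the first-best threshold [c/(A(1-α)(Λ₁-1))]^{1/α}. -/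
open Real Set

theorem stmt18 (α θ A c lb μ τ : ℝ) (hα : α ∈ Ioo (0:ℝ) 1) (hθ : 0 < θ)
    (hA : 0 < A) (hc : 0 < c) (hl : 0 < lb)
    (hμ : μ ∈ Icc (0:ℝ) 1) (hτ : τ ∈ Icc (0:ℝ) 1)
    (Λ : ℝ) (hΛ : Λ = (α * θ / (1 - μ * (1-α))) ^ ((1:ℝ)/(1-α)))
    (hpos : τ < θ * Λ ^ α) :
    (0 < (1-α) * A * lb ^ α * (θ * Λ ^ α - τ) / (1 + (Λ - 1) * 0) ^ α - c ↔
      lb > (c / ((1-α) * A * (θ * Λ ^ α - τ))) ^ ((1:ℝ)/α)) ∧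
    (μ = 1 → τ = 1 → 1 < θ →
      (c / ((1-α) * A * (θ * Λ ^ α - τ))) ^ ((1:ℝ)/α)
        = (c / (A * (1-α) * (θ ^ ((1:ℝ)/(1-α)) - 1))) ^ ((1:ℝ)/α)) := by
  obtain ⟨hα0, hα1⟩ := hα
  have h1α : 0 < 1 - α := by linarith
  have hD : 0 < (1-α) * A * (θ * Λ ^ α - τ) := by
    have : 0 < θ * Λ ^ α - τ := by linarith
    positivity
  constructor
  · have hsim : (1 + (Λ - 1) * (0:ℝ)) ^ α = 1 := by
      norm_num
    rw [hsim, div_one]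
    set D := (1-α) * A * (θ * Λ ^ α - τ) with hDdef
    have hcD : 0 < c / D := by positivity
    rw [gt_iff_lt, ← Real.rpow_lt_rpow_iff (Real.rpow_nonneg hcD.le _) hl.le hα0,
      ← Real.rpow_mul hcD.le, one_div_mul_cancel hα0.ne', Real.rpow_one,
      div_lt_iff₀ hD]
    constructor <;> intro h <;> nlinarith
  · intro hμ1 hτ1 hθ1
    subst hμ1 hτ1
    have hΛθ : Λ = θ ^ ((1:ℝ)/(1-α)) := by
      rw [hΛ]
      congr 1
      field_simp
      rw [sub_sub_cancel, div_self hα0.ne']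
    have hΛα : θ * Λ ^ α = θ ^ ((1:ℝ)/(1-α)) := by
      rw [hΛθ, ← Real.rpow_mul hθ.le]
      nth_rewrite 1 [← Real.rpow_one θ]
      rw [← Real.rpow_add hθ]
      congr 1
      field_simp
      ring
    rw [hΛα]
    ring_nf
end

section
/- In the three-sector extension, for fixed manufacturing labor share l_m ∈ [0,1), the equilibrium condition MP_L^e = AP_L^c, i.e. θα(t/l_e)^{1-α} = ((1-t)/((1-l_m)-l_e))^{1-α}, has the unique solution l_e = (1-l_m)·Λ₀t/(1+(Λ₀-1)t) with Λ₀ = (αθ)^{1/(1-α)}, for each t ∈ (0,1). -/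
open Real Set

lemma rpow_cancel {a b c : ℝ} (ha : 0 < a) (hb : 0 < b) (hc : c ≠ 0)
    (h : a ^ c = b ^ c) : a = b := by
  have h2 := congrArg (fun x : ℝ => x ^ c⁻¹) h
  simp only [← Real.rpow_mul ha.le, ← Real.rpow_mul hb.le,
    mul_inv_cancel₀ hc, Real.rpow_one] at h2
  exact h2

theorem stmt19 (α θ lm t : ℝ) (hα : α ∈ Ioo (0:ℝ) 1) (hθ : 0 < θ)
    (hlm : lm ∈ Ico (0:ℝ) 1) (ht : t ∈ Ioo (0:ℝ) 1)
    (Λ : ℝ) (hΛ : Λ = (α * θ) ^ ((1:ℝ)/(1-α))) :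
    (1 - lm) * (Λ * t / (1 + (Λ - 1) * t)) ∈ Ioo (0:ℝ) (1 - lm) ∧
    θ * α * (t / ((1 - lm) * (Λ * t / (1 + (Λ - 1) * t)))) ^ (1-α)
      = ((1 - t) / ((1 - lm) - (1 - lm) * (Λ * t / (1 + (Λ - 1) * t)))) ^ (1-α) ∧
    ∀ le ∈ Ioo (0:ℝ) (1 - lm),
      θ * α * (t / le) ^ (1-α) = ((1 - t) / ((1 - lm) - le)) ^ (1-α) →
        le = (1 - lm) * (Λ * t / (1 + (Λ - 1) * t)) := by
  obtain ⟨hα0, hα1⟩ := hα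
  obtain ⟨ht0, ht1⟩ := ht
  have hlm1 : 0 < 1 - lm := by linarith [hlm.2]
  have hαθ : 0 < α * θ := mul_pos hα0 hθ
  have hΛ0 : 0 < Λ := hΛ ▸ Real.rpow_pos_of_pos hαθ _
  have he : (1:ℝ) - α ≠ 0 := by linarith
  have hΛpow : Λ ^ (1 - α) = α * θ := by
    rw [hΛ, ← Real.rpow_mul hαθ.le, one_div_mul_cancel he, Real.rpow_one]
  have hD : 0 < 1 + (Λ - 1) * t := by nlinarith
  set x : ℝ := Λ * t / (1 + (Λ - 1) * t) with hx
  have hx0 : 0 < x := div_pos (mul_pos hΛ0 ht0) hD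
  have hx1 : x < 1 := by
    rw [hx, div_lt_one hD]; nlinarith
  have hle0 : 0 < (1 - lm) * x := mul_pos hlm1 hx0
  have hle1 : (1 - lm) * x < 1 - lm := by nlinarith
  have key : ∀ le : ℝ, 0 < le → le < 1 - lm →
      (θ * α * (t / le) ^ (1-α) = ((1 - t) / ((1 - lm) - le)) ^ (1-α)
        ↔ Λ * t / le = (1 - t) / ((1 - lm) - le)) := by
    intro le h0 h1
    have hrem : 0 < (1 - lm) - le := by linarith
    have ha : 0 < Λ * t / le := div_pos (mul_pos hΛ0 ht0) h0
    have hb : 0 < (1 - t) / ((1 - lm) - le) := div_pos (by linarith) hrem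
    have hrw : θ * α * (t / le) ^ (1-α) = (Λ * t / le) ^ (1-α) := by
      rw [show Λ * t / le = Λ * (t / le) by ring,
        Real.mul_rpow hΛ0.le (div_pos ht0 h0).le, hΛpow]
      ring
    rw [hrw]
    constructor
    · intro h; exact rpow_cancel ha hb he h
    · intro h; rw [h]
  refine ⟨⟨hle0, hle1⟩, ?_, ?_⟩
  · rw [key _ hle0 hle1]
    rw [div_eq_div_iff (ne_of_gt hle0) (by nlinarith : (1-lm) - (1-lm)*x ≠ 0)]
    have : x * (1 + (Λ - 1) * t) = Λ * t := by
      rw [hx]; exact div_mul_cancel₀ _ hD.ne'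
    nlinarith [this]
  · intro le hle heq
    rw [key _ hle.1 hle.2] at heq
    have hrem : 0 < (1 - lm) - le := by linarith [hle.2]
    rw [div_eq_div_iff (ne_of_gt hle.1) (ne_of_gt hrem)] at heq
    rw [hx, mul_div_assoc', eq_div_iff hD.ne']
    nlinarith [heq]
end
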